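/- arXiv:2110.14206 — 2 statements merged into one kernel-verified Lean document; each statement's English description precedes it below -/
import Mathlib

section
/- For all 0 ≤ m ≤ p and all a ∈ {±1}^{2p+1}, H_D^{(m)}(ā) = conj(H_D^{(m)}(a)), where ā_j = a_{-j}. -/
open scoped Classical
open Finset

noncomputable section

/-- Bit strings in {±1}^{2p+1}, indexed by integers -p ≤ j ≤ p (Bool-encoded). -/
def QStr (p : ℕ) : Type := {j : ℤ // j ∈ Finset.Icc (-(p : ℤ)) (p : ℤ)} → Bool

instance (p : ℕ) : Fintype (QStr p) := by unfold QStr; infer_instance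
instance (p : ℕ) : DecidableEq (QStr p) := by unfold QStr; infer_instance

/-- The ±1 entry of the string `a` at index `j` (1 outside the index range). -/
def ent (p : ℕ) (a : QStr p) (j : ℤ) : ℝ :=
  if h : j ∈ Finset.Icc (-(p : ℤ)) (p : ℤ) then (if a ⟨j, h⟩ then 1 else -1) else 1

/-- Transfer matrix element ⟨x|e^{iβX}|y⟩ = cos β if x = y, i sin β otherwise. -/
def bket (x y : ℝ) (β : ℝ) : ℂ :=
  if x = y then (Real.cos β : ℂ) else Complex.I * (Real.sin β : ℂ)

/-- f(a) = (1/2)⟨a₁|e^{iβ₁X}|a₂⟩⋯⟨a_p|e^{iβ_pX}|a₀⟩⟨a₀|e^{-iβ_pX}|a_{-p}⟩⋯⟨a_{-2}|e^{-iβ₁X}|a_{-1}⟩. -/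
def fQ (p : ℕ) (β : ℕ → ℝ) (a : QStr p) : ℂ :=
  (1 / 2 : ℂ) * ∏ r ∈ Finset.Icc 1 p,
    (bket (ent p a (r : ℤ)) (ent p a (if r = p then 0 else (r : ℤ) + 1)) (β r) *
      bket (ent p a (if r = p then 0 else -((r : ℤ) + 1))) (ent p a (-(r : ℤ))) (-(β r)))

/-- Γ_r = γ_r, Γ₀ = 0, Γ_{-r} = -γ_r. -/
def Gam (γ : ℕ → ℝ) (j : ℤ) : ℝ :=
  if 0 < j then γ j.toNat else if j < 0 then -(γ (-j).toNat) else 0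

/-- Γ·(ab) = Σ_{j=-p}^{p} Γ_j a_j b_j. -/
def Gdot (p : ℕ) (γ : ℕ → ℝ) (a b : QStr p) : ℝ :=
  ∑ j ∈ Finset.Icc (-(p : ℤ)) (p : ℤ), Gam γ j * ent p a j * ent p b j

/-- a ∈ B₀ iff a_{-r} = a_r for all 1 ≤ r ≤ p. -/
def symB (p : ℕ) (a : QStr p) : Prop :=
  ∀ r ∈ Finset.Icc (1 : ℤ) (p : ℤ), ent p a (-r) = ent p a r

/-- T(a): the largest 1 ≤ r ≤ p with a_r ≠ a_{-r}, and 0 for a ∈ B₀. -/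
def Tof (p : ℕ) (a : QStr p) : ℤ :=
  (((Finset.Icc (1 : ℤ) (p : ℤ)).filter (fun r => ent p a r ≠ ent p a (-r))).max).unbotD 0

/-- The string a' : negate entries with 1 ≤ |j| ≤ T(a), keep the rest. -/
def primeQ (p : ℕ) (a : QStr p) : QStr p :=
  fun j => if 1 ≤ |j.1| ∧ |j.1| ≤ Tof p a then !(a j) else a j

/-- Entrywise negation -a. -/
def negQ (p : ℕ) (a : QStr p) : QStr p := fun j => !(a j)

/-- Index reversal ā, with ā_j = a_{-j}. -/
def revQ (p : ℕ) (a : QStr p) : QStr p :=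
  fun j => a ⟨-j.1, by have h := j.2; simp only [Finset.mem_Icc] at h ⊢; omega⟩

/-- The finite-D iteration (cosine form):
H_D^{(0)}(a) = 1, H_D^{(m)}(a) = (Σ_b f(b) H_D^{(m-1)}(b) cos[(1/√D) Γ·(ab)])^D. -/
def HD (p : ℕ) (β γ : ℕ → ℝ) (D : ℕ) : ℕ → QStr p → ℂ
  | 0, _ => 1
  | m + 1, a =>
      (∑ b : QStr p, fQ p β b * HD p β γ D m b *
        (Real.cos ((1 / Real.sqrt D) * Gdot p γ a b) : ℂ)) ^ D

/-- The finite-D iteration (exponential form):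
H_D^{(0)}(a) = 1, H_D^{(m)}(a) = (Σ_b f(b) H_D^{(m-1)}(b) exp[-(i/√D) Γ·(ab)])^D. -/
def HDexp (p : ℕ) (β γ : ℕ → ℝ) (D : ℕ) : ℕ → QStr p → ℂ
  | 0, _ => 1
  | m + 1, a =>
      (∑ b : QStr p, fQ p β b * HDexp p β γ D m b *
        Complex.exp (-(Complex.I / (Real.sqrt D : ℂ)) * (Gdot p γ a b : ℂ))) ^ D

/-- The D → ∞ iteration: H^{(0)}(a) = 1,
H^{(m)}(a) = exp(-(1/2) Σ_b f(b) H^{(m-1)}(b) (Γ·(ab))²). -/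
def Hinf (p : ℕ) (β γ : ℕ → ℝ) : ℕ → QStr p → ℂ
  | 0, _ => 1
  | m + 1, a =>
      Complex.exp (-(1 / 2 : ℂ) *
        ∑ b : QStr p, fQ p β b * Hinf p β γ m b * ((Gdot p γ a b) ^ 2 : ℝ))

/-- G^{(m)}_{j,k} = Σ_a f(a) H^{(m)}(a) a_j a_k, with H^{(m)} the D → ∞ iterates. -/
def GmatH (p : ℕ) (β γ : ℕ → ℝ) (m : ℕ) (j k : ℤ) : ℂ :=
  ∑ a : QStr p, fQ p β a * Hinf p β γ m a * (ent p a j : ℂ) * (ent p a k : ℂ)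

/-- The recursively-defined G matrices: G^{(0)}_{j,k} = Σ_a f(a) a_j a_k and
G^{(m)}_{j,k} = Σ_a f(a) a_j a_k exp(-(1/2) Σ_{j',k'} G^{(m-1)}_{j',k'} Γ_{j'} Γ_{k'} a_{j'} a_{k'}). -/
def GmatR (p : ℕ) (β γ : ℕ → ℝ) : ℕ → ℤ → ℤ → ℂ
  | 0, j, k => ∑ a : QStr p, fQ p β a * (ent p a j : ℂ) * (ent p a k : ℂ)
  | m + 1, j, k =>
      ∑ a : QStr p, fQ p β a * (ent p a j : ℂ) * (ent p a k : ℂ) *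
        Complex.exp (-(1 / 2 : ℂ) *
          ∑ j' ∈ Finset.Icc (-(p : ℤ)) (p : ℤ), ∑ k' ∈ Finset.Icc (-(p : ℤ)) (p : ℤ),
            GmatR p β γ m j' k' * (Gam γ j' : ℂ) * (Gam γ k' : ℂ) *
              (ent p a j' : ℂ) * (ent p a k' : ℂ))

/-- H^{(m+1)}(a) expressed through G^{(m)}:
H^{(m+1)}(a) = exp(-(1/2) Σ_{j',k'} G^{(m)}_{j',k'} Γ_{j'} Γ_{k'} a_{j'} a_{k'}). -/
def HG (p : ℕ) (β γ : ℕ → ℝ) (m : ℕ) (a : QStr p) : ℂ :=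
  Complex.exp (-(1 / 2 : ℂ) *
    ∑ j' ∈ Finset.Icc (-(p : ℤ)) (p : ℤ), ∑ k' ∈ Finset.Icc (-(p : ℤ)) (p : ℤ),
      GmatR p β γ m j' k' * (Gam γ j' : ℂ) * (Gam γ k' : ℂ) *
        (ent p a j' : ℂ) * (ent p a k' : ℂ))

end

lemma ent_rev (p : ℕ) (a : QStr p) (j : ℤ) : ent p (revQ p a) j = ent p a (-j) := by
  unfold ent revQ
  by_cases h : j ∈ Finset.Icc (-(p : ℤ)) (p : ℤ)
  · have h' : -j ∈ Finset.Icc (-(p : ℤ)) (p : ℤ) := by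
      simp only [Finset.mem_Icc] at h ⊢; omega
    rw [dif_pos h, dif_pos h']
  · have h' : -j ∉ Finset.Icc (-(p : ℤ)) (p : ℤ) := by
      simp only [Finset.mem_Icc] at h ⊢; omega
    rw [dif_neg h, dif_neg h']

lemma revQ_revQ (p : ℕ) (a : QStr p) : revQ p (revQ p a) = a := by
  funext j
  unfold revQ
  simp

lemma Gam_neg (γ : ℕ → ℝ) (j : ℤ) : Gam γ (-j) = -Gam γ j := by
  unfold Gam
  rcases lt_trichotomy j 0 with h | h | h
  · rw [if_pos (by omega : (0:ℤ) < -j), if_neg (by omega), if_pos h, neg_neg]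
  · subst h; simp
  · rw [if_neg (by omega : ¬(0:ℤ) < -j), if_pos (by omega : -j < 0), if_pos h, neg_neg]

lemma Gdot_rev (p : ℕ) (γ : ℕ → ℝ) (a b : QStr p) :
    Gdot p γ (revQ p a) (revQ p b) = -Gdot p γ a b := by
  unfold Gdot
  rw [← Finset.sum_neg_distrib]
  refine Finset.sum_equiv (Equiv.neg ℤ) (fun j => ?_) (fun j _ => ?_)
  · simp only [Equiv.neg_apply, Finset.mem_Icc]; omega
  · simp only [Equiv.neg_apply]
    rw [ent_rev, ent_rev, Gam_neg]
    ring

lemma bket_comm (x y β : ℝ) : bket x y β = bket y x β := by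
  unfold bket
  rcases eq_or_ne x y with h | h
  · simp [h]
  · rw [if_neg h, if_neg (Ne.symm h)]

lemma bket_conj (x y β : ℝ) : (starRingEnd ℂ) (bket x y β) = bket x y (-β) := by
  unfold bket
  split
  · rw [Real.cos_neg, Complex.conj_ofReal]
  · rw [map_mul, Complex.conj_I, Complex.conj_ofReal, Real.sin_neg, Complex.ofReal_neg]
    ring

lemma fQ_rev (p : ℕ) (β : ℕ → ℝ) (a : QStr p) :
    fQ p β (revQ p a) = (starRingEnd ℂ) (fQ p β a) := by
  unfold fQ
  rw [map_mul, map_prod]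
  congr 1
  · rw [map_div₀, map_one, map_ofNat]
  refine Finset.prod_congr rfl fun r hr => ?_
  rw [map_mul, bket_conj, bket_conj, neg_neg, ent_rev, ent_rev, ent_rev, ent_rev]
  have h1 : -(if r = p then 0 else (r : ℤ) + 1) = (if r = p then 0 else -((r : ℤ) + 1)) := by
    split <;> ring
  have h2 : -(if r = p then 0 else -((r : ℤ) + 1)) = (if r = p then 0 else (r : ℤ) + 1) := by
    split <;> ring
  rw [h1, h2, neg_neg, mul_comm, bket_comm (ent p a (-(r:ℤ))),
    bket_comm (ent p a (if r = p then 0 else (r : ℤ) + 1)) (ent p a (r : ℤ))]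

/-- H_D^{(m)}(ā) = conj(H_D^{(m)}(a)) for 0 ≤ m ≤ p. -/
theorem stmt_8 (p : ℕ) (hp : 1 ≤ p) (D : ℕ) (hD : 1 ≤ D) (β γ : ℕ → ℝ)
    (m : ℕ) (hm : m ≤ p) (a : QStr p) :
    HD p β γ D m (revQ p a) = (starRingEnd ℂ) (HD p β γ D m a) := by
  clear hm hp hD
  induction m generalizing a with
  | zero => simp [HD]
  | succ m ih =>
    simp only [HD]
    rw [map_pow, map_sum]
    refine congrArg (fun z => z ^ D) ?_
    refine Fintype.sum_equiv (⟨revQ p, revQ p, revQ_revQ p, revQ_revQ p⟩ : QStr p ≃ QStr p)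
      _ _ fun b => ?_
    simp only [Equiv.coe_fn_mk]
    have hg : Gdot p γ a (revQ p b) = -Gdot p γ (revQ p a) b := by
      conv_lhs => rw [← revQ_revQ p a]
      exact Gdot_rev p γ (revQ p a) b
    rw [fQ_rev, ih, hg, mul_neg, Real.cos_neg, map_mul, map_mul, Complex.conj_conj,
      Complex.conj_conj, Complex.conj_ofReal]
end

section
/- For a ∈ {±1}^{2p+1} and 1 ≤ m ≤ p, the iteration H_D^{(m)}(a) = (Σ_b f(b) H_D^{(m-1)}(b) cos[(1/√D) Γ·(ab)])^D can be restricted to the sum over b with T(b) ≤ T(a); that is, the contribution of all terms with T(b) > T(a) vanishes. -/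
open scoped Classical
open Finset

namespace Aux12

variable {p : ℕ}

lemma tof_eq_zero_or (b : QStr p) :
    Tof p b = 0 ∨ (1 ≤ Tof p b ∧ Tof p b ≤ (p : ℤ) ∧
      ent p b (Tof p b) ≠ ent p b (-(Tof p b))) := by
  unfold Tof
  rcases hmax : (((Finset.Icc (1 : ℤ) (p : ℤ)).filter
      (fun r => ent p b r ≠ ent p b (-r))).max) with _ | t
  · left; rfl
  · right
    have ht := Finset.mem_of_max hmax
    simp only [Finset.mem_filter, Finset.mem_Icc] at ht
    exact ⟨ht.1.1, ht.1.2, ht.2⟩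

lemma tof_nonneg (b : QStr p) : 0 ≤ Tof p b := by
  rcases tof_eq_zero_or b with h | h
  · omega
  · omega

lemma tof_le (b : QStr p) : Tof p b ≤ (p : ℤ) := by
  rcases tof_eq_zero_or b with h | h
  · omega
  · omega

lemma tof_spec_gt (b : QStr p) {r : ℤ} (h1 : 1 ≤ r) (h2 : r ≤ (p : ℤ))
    (h : Tof p b < r) : ent p b r = ent p b (-r) := by
  by_contra hne
  have hmem : r ∈ ((Finset.Icc (1 : ℤ) (p : ℤ)).filter
      (fun r => ent p b r ≠ ent p b (-r))) := by
    simp only [Finset.mem_filter, Finset.mem_Icc]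
    exact ⟨⟨h1, h2⟩, hne⟩
  obtain ⟨t, hmax⟩ := Finset.max_of_nonempty ⟨r, hmem⟩
  have hle := Finset.le_max hmem
  rw [hmax, WithBot.coe_le_coe] at hle
  unfold Tof at h
  rw [hmax, WithBot.unbotD_coe] at h
  omega

end Aux12

namespace Aux12

lemma ent_pm (a : QStr p) (j : ℤ) : ent p a j = 1 ∨ ent p a j = -1 := by
  unfold ent
  split
  · split
    · left; rfl
    · right; rfl
  · left; rfl

lemma eq_neg_of_ne {x y : ℝ} (hx : x = 1 ∨ x = -1) (hy : y = 1 ∨ y = -1)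
    (h : x ≠ y) : y = -x := by
  rcases hx with rfl | rfl <;> rcases hy with rfl | rfl <;> norm_num at *

lemma ent_primeQ (b : QStr p) (j : ℤ) :
    ent p (primeQ p b) j =
      if 1 ≤ |j| ∧ |j| ≤ Tof p b then -(ent p b j) else ent p b j := by
  by_cases h : j ∈ Finset.Icc (-(p : ℤ)) (p : ℤ)
  · show (if h' : j ∈ _ then (if (primeQ p b) ⟨j, h'⟩ then (1:ℝ) else -1) else 1) = _
    rw [dif_pos h]
    show (if (if 1 ≤ |j| ∧ |j| ≤ Tof p b then !(b ⟨j, h⟩) else b ⟨j, h⟩) then (1:ℝ) else -1) = _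
    by_cases hc : 1 ≤ |j| ∧ |j| ≤ Tof p b
    · rw [if_pos hc, if_pos hc]
      unfold ent
      rw [dif_pos h]
      cases b ⟨j, h⟩ <;> simp
    · rw [if_neg hc, if_neg hc]
      unfold ent
      rw [dif_pos h]
  · have hc : ¬(1 ≤ |j| ∧ |j| ≤ Tof p b) := by
      rintro ⟨h1, h2⟩
      have h3 := h2.trans (tof_le b)
      rw [Finset.mem_Icc] at h
      rcases abs_le.mp h3 with ⟨ha, hb⟩
      exact h ⟨ha, hb⟩
    unfold ent
    rw [dif_neg h, dif_neg h, if_neg hc]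

lemma ent_primeQ_flip (b : QStr p) {j : ℤ} (h1 : 1 ≤ |j|) (h2 : |j| ≤ Tof p b) :
    ent p (primeQ p b) j = -(ent p b j) := by
  rw [ent_primeQ, if_pos ⟨h1, h2⟩]

lemma ent_primeQ_fix (b : QStr p) {j : ℤ} (h : ¬(1 ≤ |j| ∧ |j| ≤ Tof p b)) :
    ent p (primeQ p b) j = ent p b j := by
  rw [ent_primeQ, if_neg h]

lemma tof_primeQ (b : QStr p) : Tof p (primeQ p b) = Tof p b := by
  unfold Tof
  congr 1
  congr 1
  apply Finset.filter_congr
  intro r hr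
  rw [Finset.mem_Icc] at hr
  have hrabs : |r| = r := abs_of_nonneg (by omega)
  have hrabs' : |(-r)| = r := by rw [abs_neg, hrabs]
  rw [ent_primeQ, ent_primeQ, hrabs, hrabs']
  by_cases hc : 1 ≤ r ∧ r ≤ Tof p b
  · rw [if_pos hc, if_pos hc]
    simp [neg_inj]
  · rw [if_neg hc, if_neg hc]

lemma primeQ_primeQ (b : QStr p) : primeQ p (primeQ p b) = b := by
  funext j
  show (if 1 ≤ |j.1| ∧ |j.1| ≤ Tof p (primeQ p b) then !(primeQ p b j) else primeQ p b j) = b j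
  rw [tof_primeQ]
  show (if 1 ≤ |j.1| ∧ |j.1| ≤ Tof p b then
      !(if 1 ≤ |j.1| ∧ |j.1| ≤ Tof p b then !(b j) else b j)
    else (if 1 ≤ |j.1| ∧ |j.1| ≤ Tof p b then !(b j) else b j)) = b j
  by_cases hc : 1 ≤ |j.1| ∧ |j.1| ≤ Tof p b <;> simp [hc]

lemma primeQ_ne (b : QStr p) (h : 1 ≤ Tof p b) : primeQ p b ≠ b := by
  intro heq
  have hmem : Tof p b ∈ Finset.Icc (-(p : ℤ)) (p : ℤ) := by
    rw [Finset.mem_Icc]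
    have := tof_le b
    omega
  have h2 := congrFun heq ⟨Tof p b, hmem⟩
  have hcond : 1 ≤ |Tof p b| ∧ |Tof p b| ≤ Tof p b := by
    rw [abs_of_nonneg (tof_nonneg b)]
    exact ⟨h, le_refl _⟩
  rw [show primeQ p b ⟨Tof p b, hmem⟩ =
      if 1 ≤ |Tof p b| ∧ |Tof p b| ≤ Tof p b then !(b ⟨Tof p b, hmem⟩) else b ⟨Tof p b, hmem⟩ from rfl,
    if_pos hcond] at h2
  exact Bool.not_ne_self _ h2

end Aux12

namespace Aux12

lemma sum_decomp (n : ℕ) (g : ℤ → ℝ) :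
    ∑ j ∈ Finset.Icc (-(n : ℤ)) (n : ℤ), g j =
      g 0 + ∑ r ∈ Finset.Icc (1 : ℤ) (n : ℤ), (g r + g (-r)) := by
  induction n with
  | zero => simp
  | succ n ih =>
    have h1 : Finset.Icc (-(n + 1 : ℕ) : ℤ) ((n + 1 : ℕ) : ℤ) =
        insert (-((n : ℤ) + 1)) (insert ((n : ℤ) + 1)
          (Finset.Icc (-(n : ℤ)) (n : ℤ))) := by
      ext x
      simp only [Finset.mem_Icc, Finset.mem_insert]
      push_cast
      omega
    have h2 : Finset.Icc (1 : ℤ) ((n + 1 : ℕ) : ℤ) =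
        insert ((n : ℤ) + 1) (Finset.Icc (1 : ℤ) (n : ℤ)) := by
      ext x
      simp only [Finset.mem_Icc, Finset.mem_insert]
      push_cast
      omega
    rw [h1, h2, Finset.sum_insert (by simp only [Finset.mem_insert, Finset.mem_Icc]; omega),
      Finset.sum_insert (by simp only [Finset.mem_Icc]; omega),
      Finset.sum_insert (by simp only [Finset.mem_Icc]; omega), ih]
    ring

lemma gam_zero (γ : ℕ → ℝ) : Gam γ 0 = 0 := rfl

lemma gam_neg (γ : ℕ → ℝ) (j : ℤ) : Gam γ (-j) = -(Gam γ j) := by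
  unfold Gam
  rcases lt_trichotomy j 0 with h | rfl | h
  · rw [if_pos (by omega : (0:ℤ) < -j), if_neg (by omega : ¬(0:ℤ) < j), if_pos h, neg_neg]
  · norm_num
  · rw [if_neg (by omega : ¬(0:ℤ) < -j), if_pos (by omega : (-j:ℤ) < 0), if_pos h, neg_neg]

lemma gdot_comm (γ : ℕ → ℝ) (a b : QStr p) : Gdot p γ a b = Gdot p γ b a := by
  unfold Gdot
  apply Finset.sum_congr rfl
  intro j _
  ring

lemma gdot_flip (γ : ℕ → ℝ) (a b : QStr p)
    (h : ∀ r : ℤ, 1 ≤ r → r ≤ (p : ℤ) → Tof p b < r → ent p a r = ent p a (-r)) :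
    Gdot p γ a (primeQ p b) = -(Gdot p γ a b) := by
  unfold Gdot
  rw [sum_decomp, sum_decomp]
  have hterm : ∀ r ∈ Finset.Icc (1 : ℤ) (p : ℤ),
      (Gam γ r * ent p a r * ent p (primeQ p b) r +
        Gam γ (-r) * ent p a (-r) * ent p (primeQ p b) (-r)) =
      -((Gam γ r * ent p a r * ent p b r +
        Gam γ (-r) * ent p a (-r) * ent p b (-r))) := by
    intro r hr
    rw [Finset.mem_Icc] at hr
    have habs : |r| = r := abs_of_nonneg (by omega)
    have habs' : |(-r)| = r := by rw [abs_neg, habs]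
    rcases le_or_gt r (Tof p b) with hle | hgt
    · rw [ent_primeQ_flip b (j := r) (by omega) (by omega),
        ent_primeQ_flip b (j := -r) (by rw [habs']; omega) (by rw [habs']; omega)]
      ring
    · rw [ent_primeQ_fix b (j := r) (by rw [habs]; omega),
        ent_primeQ_fix b (j := -r) (by rw [habs']; omega)]
      rw [gam_neg, h r hr.1 hr.2 hgt, tof_spec_gt b hr.1 hr.2 hgt]
      ring
  rw [Finset.sum_congr rfl hterm, Finset.sum_neg_distrib, gam_zero]
  ring

end Aux12

namespace Aux12

lemma bket_neg_neg (x y β : ℝ) : bket (-x) (-y) β = bket x y β := by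
  unfold bket
  by_cases h : x = y
  · rw [if_pos h, if_pos (neg_inj.mpr h)]
  · rw [if_neg h, if_neg (fun hh => h (neg_inj.mp hh))]

lemma boundary_flip (x c : ℝ) (hx : x = 1 ∨ x = -1) (hc : c = 1 ∨ c = -1) (β : ℝ) :
    bket (-x) c β * bket c x (-β) = -(bket x c β * bket c (-x) (-β)) := by
  rcases hx with rfl | rfl <;> rcases hc with rfl | rfl <;>
    · norm_num [bket, Real.cos_neg, Real.sin_neg]
      ring

end Aux12

namespace Aux12

lemma fQ_primeQ (β : ℕ → ℝ) (b : QStr p) (hT : 1 ≤ Tof p b) :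
    fQ p β (primeQ p b) = -(fQ p β b) := by
  rcases tof_eq_zero_or b with h0 | ⟨h1, h2, hne⟩
  · omega
  set t : ℕ := (Tof p b).toNat with htdef
  have htZ : (t : ℤ) = Tof p b := Int.toNat_of_nonneg (tof_nonneg b)
  have ht1 : 1 ≤ t := by omega
  have htp : t ≤ p := by omega
  have hmem : t ∈ Finset.Icc 1 p := by rw [Finset.mem_Icc]; exact ⟨ht1, htp⟩
  have hne' : ent p b (t : ℤ) ≠ ent p b (-(t : ℤ)) := by rw [htZ]; exact hne
  have hyx : ent p b (-(t : ℤ)) = -(ent p b (t : ℤ)) :=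
    eq_neg_of_ne (ent_pm b _) (ent_pm b _) hne'
  have herase : ∀ r ∈ (Finset.Icc 1 p).erase t,
      (bket (ent p (primeQ p b) (r : ℤ))
          (ent p (primeQ p b) (if r = p then 0 else (r : ℤ) + 1)) (β r) *
        bket (ent p (primeQ p b) (if r = p then 0 else -((r : ℤ) + 1)))
          (ent p (primeQ p b) (-(r : ℤ))) (-(β r))) =
      (bket (ent p b (r : ℤ)) (ent p b (if r = p then 0 else (r : ℤ) + 1)) (β r) *
        bket (ent p b (if r = p then 0 else -((r : ℤ) + 1))) (ent p b (-(r : ℤ))) (-(β r))) := by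
    intro r hr
    obtain ⟨hrt, hrm⟩ := Finset.mem_erase.mp hr
    rw [Finset.mem_Icc] at hrm
    have e1 : |(r : ℤ)| = (r : ℤ) := abs_of_nonneg (by positivity)
    have e2 : |((r : ℤ) + 1)| = (r : ℤ) + 1 := abs_of_nonneg (by positivity)
    have e3 : |(-((r : ℤ) + 1))| = (r : ℤ) + 1 := by rw [abs_neg, e2]
    have e4 : |(-(r : ℤ))| = (r : ℤ) := by rw [abs_neg, e1]
    rcases Nat.lt_or_ge r t with hlt | hge
    · -- r < t : all four indices flipped
      have hrp : ¬ r = p := by omega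
      rw [if_neg hrp, if_neg hrp,
        ent_primeQ_flip b (j := (r : ℤ)) (by omega) (by omega),
        ent_primeQ_flip b (j := (r : ℤ) + 1) (by omega) (by omega),
        ent_primeQ_flip b (j := -((r : ℤ) + 1)) (by omega) (by omega),
        ent_primeQ_flip b (j := -(r : ℤ)) (by omega) (by omega),
        bket_neg_neg, bket_neg_neg]
    · -- t < r : no index flipped
      have hgt : t < r := by omega
      by_cases hrp : r = p
      · subst hrp
        rw [if_pos rfl, if_pos rfl,
          ent_primeQ_fix b (j := (r : ℤ)) (by omega),
          ent_primeQ_fix b (j := (0 : ℤ)) (by simp),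
          ent_primeQ_fix b (j := -(r : ℤ)) (by omega)]
      · rw [if_neg hrp, if_neg hrp,
          ent_primeQ_fix b (j := (r : ℤ)) (by omega),
          ent_primeQ_fix b (j := (r : ℤ) + 1) (by omega),
          ent_primeQ_fix b (j := -((r : ℤ) + 1)) (by omega),
          ent_primeQ_fix b (j := -(r : ℤ)) (by omega)]
  have hbdry :
      (bket (ent p (primeQ p b) (t : ℤ))
          (ent p (primeQ p b) (if t = p then 0 else (t : ℤ) + 1)) (β t) *
        bket (ent p (primeQ p b) (if t = p then 0 else -((t : ℤ) + 1)))
          (ent p (primeQ p b) (-(t : ℤ))) (-(β t))) =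
      -((bket (ent p b (t : ℤ)) (ent p b (if t = p then 0 else (t : ℤ) + 1)) (β t) *
        bket (ent p b (if t = p then 0 else -((t : ℤ) + 1))) (ent p b (-(t : ℤ))) (-(β t)))) := by
    have f1 : |(t : ℤ)| = (t : ℤ) := abs_of_nonneg (by positivity)
    have f2 : |((t : ℤ) + 1)| = (t : ℤ) + 1 := abs_of_nonneg (by positivity)
    have f3 : |(-((t : ℤ) + 1))| = (t : ℤ) + 1 := by rw [abs_neg, f2]
    have f4 : |(-(t : ℤ))| = (t : ℤ) := by rw [abs_neg, f1]
    by_cases htp' : t = p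
    · rw [if_pos htp', if_pos htp',
        ent_primeQ_flip b (j := (t : ℤ)) (by omega) (by omega),
        ent_primeQ_fix b (j := (0 : ℤ)) (by simp),
        ent_primeQ_flip b (j := -(t : ℤ)) (by omega) (by omega),
        hyx, neg_neg]
      exact boundary_flip _ _ (ent_pm b _) (ent_pm b _) _
    · have hconj : ent p b (-((t : ℤ) + 1)) = ent p b ((t : ℤ) + 1) :=
        (tof_spec_gt b (by omega) (by omega) (by omega)).symm
      rw [if_neg htp', if_neg htp',
        ent_primeQ_flip b (j := (t : ℤ)) (by omega) (by omega),
        ent_primeQ_fix b (j := (t : ℤ) + 1) (by omega),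
        ent_primeQ_fix b (j := -((t : ℤ) + 1)) (by omega),
        ent_primeQ_flip b (j := -(t : ℤ)) (by omega) (by omega),
        hconj, hyx, neg_neg]
      exact boundary_flip _ _ (ent_pm b _) (ent_pm b _) _
  unfold fQ
  rw [← Finset.mul_prod_erase (Finset.Icc 1 p) _ hmem,
    ← Finset.mul_prod_erase (Finset.Icc 1 p) _ hmem,
    Finset.prod_congr rfl herase, hbdry]
  ring

end Aux12

namespace Aux12

lemma restrict_of (β γ : ℕ → ℝ) (D : ℕ) (m : ℕ)
    (hP : ∀ b : QStr p, HD p β γ D m (primeQ p b) = HD p β γ D m b) (a : QStr p) :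
    HD p β γ D (m + 1) a =
      (∑ b ∈ Finset.univ.filter (fun b : QStr p => Tof p b ≤ Tof p a),
        fQ p β b * HD p β γ D m b *
          (Real.cos ((1 / Real.sqrt D) * Gdot p γ a b) : ℂ)) ^ D := by
  have hzero : ∑ b ∈ Finset.univ.filter (fun b : QStr p => ¬ Tof p b ≤ Tof p a),
      fQ p β b * HD p β γ D m b *
        (Real.cos ((1 / Real.sqrt D) * Gdot p γ a b) : ℂ) = 0 := by
    apply Finset.sum_involution (fun b _ => primeQ p b)
    · intro b hb
      rw [Finset.mem_filter] at hb
      have hTb : Tof p a < Tof p b := lt_of_not_ge hb.2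
      have h1T : 1 ≤ Tof p b := by have := tof_nonneg a; omega
      have hG : Gdot p γ a (primeQ p b) = -(Gdot p γ a b) := by
        apply gdot_flip
        intro r hr1 hr2 hrT
        exact tof_spec_gt a hr1 hr2 (hTb.trans hrT)
      rw [fQ_primeQ β b h1T, hP b, hG, mul_neg, Real.cos_neg]
      ring
    · intro b hb _
      rw [Finset.mem_filter] at hb
      have hTb : Tof p a < Tof p b := lt_of_not_ge hb.2
      have h1T : 1 ≤ Tof p b := by have := tof_nonneg a; omega
      exact primeQ_ne b h1T
    · intro b hb
      rw [Finset.mem_filter] at hb ⊢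
      rw [tof_primeQ]
      exact ⟨Finset.mem_univ _, hb.2⟩
    · intro b _
      exact primeQ_primeQ b
  rw [HD]
  congr 1
  rw [← Finset.sum_filter_add_sum_filter_not Finset.univ
    (fun b : QStr p => Tof p b ≤ Tof p a), hzero, add_zero]

lemma HD_primeQ (β γ : ℕ → ℝ) (D : ℕ) (m : ℕ) :
    ∀ (b : QStr p), HD p β γ D m (primeQ p b) = HD p β γ D m b := by
  induction m with
  | zero => intro b; simp only [HD]
  | succ m ih =>
    intro b
    rw [restrict_of β γ D m ih (primeQ p b),
      restrict_of β γ D m ih b, tof_primeQ]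
    have hsum : ∀ c ∈ Finset.univ.filter (fun c : QStr p => Tof p c ≤ Tof p b),
        fQ p β c * HD p β γ D m c *
          (Real.cos ((1 / Real.sqrt D) * Gdot p γ (primeQ p b) c) : ℂ) =
        fQ p β c * HD p β γ D m c *
          (Real.cos ((1 / Real.sqrt D) * Gdot p γ b c) : ℂ) := by
      intro c hc
      rw [Finset.mem_filter] at hc
      have hG : Gdot p γ (primeQ p b) c = -(Gdot p γ b c) := by
        rw [gdot_comm, gdot_comm γ b c]
        apply gdot_flip
        intro r hr1 hr2 hrT
        exact tof_spec_gt c hr1 hr2 (lt_of_le_of_lt hc.2 hrT)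
      rw [hG, mul_neg, Real.cos_neg]
    rw [Finset.sum_congr rfl hsum]

end Aux12

/-- the sum in the iteration may be restricted to {b : T(b) ≤ T(a)}. -/
theorem stmt_12 (p : ℕ) (hp : 1 ≤ p) (D : ℕ) (hD : 1 ≤ D) (β γ : ℕ → ℝ)
    (m : ℕ) (hm : m + 1 ≤ p) (a : QStr p) :
    HD p β γ D (m + 1) a =
      (∑ b ∈ Finset.univ.filter (fun b : QStr p => Tof p b ≤ Tof p a),
        fQ p β b * HD p β γ D m b *
          (Real.cos ((1 / Real.sqrt D) * Gdot p γ a b) : ℂ)) ^ D :=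
  Aux12.restrict_of β γ D m (Aux12.HD_primeQ β γ D m) a
end
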